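/- Let G = (V,E) be a finite simple graph with |V| = n ≥ 1, and for 1 ≤ k ≤ n let Q_G(k) denote the number of partitions of V into exactly k nonempty independent sets (sets containing no edge of G). Then for every integer q ≥ 0, the number of proper q-colorings P_G(q) satisfies P_G(q) = Σ_{k=1}^{n} q(q-1)⋯(q-k+1) · Q_G(k); moreover C_G(-1) = Σ_{k=1}^{n} (-1)^{k-1} (k-1)! · Q_G(k), where C_G(-1) = Σ_{A ⊆ E : (V,A) connected} (-1)^{|A|}. -/

import Mathlib

open Finset SimpleGraph

/-- The number of connected components of the graph on the vertex set `W`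
with edge set `A` (isolated vertices count as components). -/
noncomputable def kcomp {V : Type*} [Fintype V] [DecidableEq V]
    (W : Finset V) (A : Finset (Sym2 V)) : ℕ :=
  Nat.card ((SimpleGraph.fromEdgeSet (A : Set (Sym2 V))).induce (W : Set V)).ConnectedComponent

/-- The edges of `G` with both endpoints in `W`, i.e. the edges of the
induced subgraph `G[W]`. -/
def edgesWithin {V : Type*} [Fintype V] [DecidableEq V]
    (G : SimpleGraph V) [DecidableRel G.Adj] (W : Finset V) : Finset (Sym2 V) :=
  G.edgeFinset.filter (fun e => ∀ x ∈ e, x ∈ W)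

/-- The multivariate Tutte polynomial of the induced subgraph `G[W]`:
`Z_{G[W]}(q,v) = Σ_{A ⊆ E(G[W])} q^{k(A)} ∏_{e ∈ A} v_e`. -/
noncomputable def Zmv {V : Type*} [Fintype V] [DecidableEq V] {R : Type*} [CommRing R]
    (G : SimpleGraph V) [DecidableRel G.Adj] (W : Finset V) (q : R) (v : Sym2 V → R) : R :=
  ∑ A ∈ (edgesWithin G W).powerset, q ^ kcomp W A * ∏ e ∈ A, v e

/-- `Ẑ_{G[W]}(q,v) = Σ_{A ⊆ E(G[W])} q^{k(A)-1} ∏_{e ∈ A} v_e`. -/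
noncomputable def ZhatMv {V : Type*} [Fintype V] [DecidableEq V] {R : Type*} [CommRing R]
    (G : SimpleGraph V) [DecidableRel G.Adj] (W : Finset V) (q : R) (v : Sym2 V → R) : R :=
  ∑ A ∈ (edgesWithin G W).powerset, q ^ (kcomp W A - 1) * ∏ e ∈ A, v e

/-- The generating polynomial of connected spanning subgraphs of `G[W]`:
`C_{G[W]}(v) = Σ_{A ⊆ E(G[W]) : k(A)=1} ∏_{e ∈ A} v_e`. -/
noncomputable def Cmv {V : Type*} [Fintype V] [DecidableEq V] {R : Type*} [CommRing R]
    (G : SimpleGraph V) [DecidableRel G.Adj] (W : Finset V) (v : Sym2 V → R) : R :=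
  ∑ A ∈ (edgesWithin G W).powerset.filter (fun A => kcomp W A = 1), ∏ e ∈ A, v e

/-!
Grouping the proper colourings by their partition into colour classes, which is a partition into
independent sets, and noting that the colourings with a given class partition `π` are the
injections from the parts of `π` into the colours, gives `P_G(q) = Σ_k q(q-1)⋯(q-k+1) Q_G(k)`.
Whitney's expansion `Σ_{A ⊆ E} (-1)^{|A|} q^{k(A)}` is also `P_G(q)`: `q^{k(A)}` counts the
colourings constant on the edges of `A`, and after exchanging the sums, inclusion–exclusion over
the monochromatic edges of a colouring leaves exactly the proper ones. Both sides are therefore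
the same polynomial in `ℤ[X]`. Its coefficient of `X` is `C_G(-1)` on Whitney's side and
`Σ_k (-1)^{k-1} (k-1)! Q_G(k)` on the other, because `X(X-1)⋯(X-k+1)` has linear coefficient
`(-1)^{k-1} (k-1)!`.
-/

open Polynomial

namespace Finpartition

variable {α : Type*} [DecidableEq α] {s : Finset α}

theorem parts_eq_image_part (P : Finpartition s) : P.parts = s.image P.part := by
  ext t
  refine ⟨fun ht => ?_, fun ht => ?_⟩
  · obtain ⟨a, ha, rfl⟩ := P.part_surjOn ht
    exact mem_image_of_mem _ ha
  · obtain ⟨a, ha, rfl⟩ := mem_image.mp ht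
    exact P.part_mem.mpr ha

theorem ext_part {P P' : Finpartition s} (h : ∀ a, P.part a = P'.part a) : P = P' := by
  ext1
  rw [parts_eq_image_part, parts_eq_image_part]
  exact image_congr fun a _ => h a

noncomputable def rep (P : Finpartition s) (t : P.parts) : α :=
  (P.nonempty_of_mem_parts t.2).choose

theorem rep_mem (P : Finpartition s) (t : P.parts) : P.rep t ∈ (t : Finset α) :=
  (P.nonempty_of_mem_parts t.2).choose_spec

theorem part_rep (P : Finpartition s) (t : P.parts) : P.part (P.rep t) = t :=
  P.part_eq_of_mem t.2 (P.rep_mem t)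

end Finpartition

section FiberPartition

variable {V α : Type*} [Fintype V] [DecidableEq V]

noncomputable def fiberPartition (σ : V → α) : Finpartition (univ : Finset V) := by
  classical exact Finpartition.ofSetoid (Setoid.ker σ)

theorem mem_part_fiberPartition {σ : V → α} {a b : V} :
    b ∈ (fiberPartition σ).part a ↔ σ a = σ b := by
  classical
  unfold fiberPartition
  exact Finpartition.mem_part_ofSetoid_iff_rel.trans Setoid.ker_def

theorem fiberPartition_eq_iff {σ : V → α} {π : Finpartition (univ : Finset V)} :
    fiberPartition σ = π ↔ ∀ a b, σ a = σ b ↔ b ∈ π.part a := by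
  refine ⟨fun h a b => ?_, fun h => Finpartition.ext_part fun a => ?_⟩
  · rw [← h, mem_part_fiberPartition]
  · ext b
    rw [mem_part_fiberPartition, h]

noncomputable def fiberPartitionEquiv (π : Finpartition (univ : Finset V)) :
    {σ : V → α // fiberPartition σ = π} ≃ (π.parts ↪ α) where
  toFun σ := ⟨fun t => σ.1 (π.rep t), fun t t' h => by
    have h' := mem_part_fiberPartition.mpr h
    rw [σ.2, π.part_rep] at h'
    exact Subtype.ext (π.part_rep t' ▸ (π.part_eq_of_mem t.2 h').symm)⟩
  invFun g := ⟨fun v => g ⟨π.part v, π.part_mem.mpr (mem_univ v)⟩, by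
    refine fiberPartition_eq_iff.mpr fun a b => ?_
    rw [g.injective.eq_iff, Subtype.mk.injEq]
    exact ((π.mem_part_iff_part_eq_part (mem_univ b) (mem_univ a)).trans eq_comm).symm⟩
  left_inv σ := by
    ext v
    exact ((fiberPartition_eq_iff.mp σ.2 v _).mpr (π.rep_mem _)).symm
  right_inv g := by
    ext t
    simp only [Function.Embedding.coeFn_mk, π.part_rep]

theorem card_fiberPartition_eq [Fintype α] (π : Finpartition (univ : Finset V)) :
    Nat.card {σ : V → α // fiberPartition σ = π} = (Fintype.card α).descFactorial #π.parts := by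
  rw [Nat.card_congr (fiberPartitionEquiv π), Nat.card_eq_fintype_card,
    Fintype.card_embedding_eq, Fintype.card_coe]

end FiberPartition

theorem Fintype.sum_comp_eq_sum_mul_card {β : Type*} [Fintype β] (f : β → ℕ) (g : ℕ → ℕ)
    {t : Finset ℕ} (ht : ∀ b, f b ∈ t) :
    ∑ b, g (f b) = ∑ k ∈ t, g k * Nat.card {b // f b = k} := by
  classical
  rw [← Finset.sum_fiberwise_of_maps_to (fun b _ => ht b)]
  refine Finset.sum_congr rfl fun k _ => ?_
  rw [sum_const_nat (fun b hb => by rw [(mem_filter.mp hb).2]), Nat.card_eq_fintype_card,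
    Fintype.card_subtype, mul_comm]

theorem Finpartition.card_parts_mem_Icc {V : Type*} [Fintype V] [DecidableEq V] [Nonempty V]
    (π : Finpartition (univ : Finset V)) : #π.parts ∈ Icc 1 (Fintype.card V) :=
  mem_Icc.mpr ⟨card_pos.mpr (π.parts_nonempty univ_nonempty.ne_empty), π.card_parts_le_card⟩

section Colorings

variable {V α : Type*} [Fintype V] [DecidableEq V] (G : SimpleGraph V)

def SimpleGraph.IsIndepPartition (π : Finpartition (univ : Finset V)) : Prop :=
  ∀ B ∈ π.parts, ∀ i ∈ B, ∀ j ∈ B, ¬ G.Adj i j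

variable {G}

theorem isIndepPartition_fiberPartition_iff {σ : V → α} :
    G.IsIndepPartition (fiberPartition σ) ↔ ∀ i j, G.Adj i j → σ i ≠ σ j := by
  refine ⟨fun h i j hij hσ => ?_, fun h B hB i hi j hj hij => ?_⟩
  · exact h _ ((fiberPartition σ).part_mem.mpr (mem_univ i))
      i ((fiberPartition σ).mem_part_self.mpr (mem_univ i)) j
      (mem_part_fiberPartition.mpr hσ) hij
  · rw [← (fiberPartition σ).part_eq_of_mem hB hi, mem_part_fiberPartition] at hj
    exact h i j hij hj

theorem card_proper_eq_sum_descFactorial [Nonempty V] [Fintype α] :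
    Nat.card {σ : V → α // ∀ i j, G.Adj i j → σ i ≠ σ j}
      = ∑ k ∈ Icc 1 (Fintype.card V), (Fintype.card α).descFactorial k *
          Nat.card {π : Finpartition (univ : Finset V) // #π.parts = k ∧ G.IsIndepPartition π} := by
  classical
  calc Nat.card {σ : V → α // ∀ i j, G.Adj i j → σ i ≠ σ j}
      = Nat.card (Σ π : {π // G.IsIndepPartition π}, {σ : V → α // fiberPartition σ = π}) :=
        Nat.card_congr (Equiv.sigmaSubtypeFiberEquivSubtype _
          fun _ => isIndepPartition_fiberPartition_iff.symm).symm
    _ = ∑ π : {π // G.IsIndepPartition π}, (Fintype.card α).descFactorial #π.1.parts := by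
        rw [Nat.card_sigma]
        exact Finset.sum_congr rfl fun π _ => card_fiberPartition_eq π.1
    _ = _ := by
        rw [Fintype.sum_comp_eq_sum_mul_card _ _ fun π => π.1.card_parts_mem_Icc]
        refine Finset.sum_congr rfl fun k _ => congrArg _ (Nat.card_congr ?_)
        exact (Equiv.subtypeSubtypeEquivSubtypeInter G.IsIndepPartition (#·.parts = k)).trans
          (Equiv.subtypeEquivRight fun _ => and_comm)

end Colorings

section Whitney

variable {V α : Type*}

theorem SimpleGraph.Reachable.eq_of_forall_adj {H : SimpleGraph V} {σ : V → α}
    (h : ∀ i j, H.Adj i j → σ i = σ j) {u v : V} (huv : H.Reachable u v) : σ u = σ v := by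
  obtain ⟨p⟩ := huv
  induction p with
  | nil => rfl
  | cons hadj _ ih => exact (h _ _ hadj).trans ih

def SimpleGraph.ConnectedComponent.liftEquiv (H : SimpleGraph V) :
    {σ : V → α // ∀ i j, H.Adj i j → σ i = σ j} ≃ (H.ConnectedComponent → α) where
  toFun σ := ConnectedComponent.lift σ.1 fun _ _ p _ => p.reachable.eq_of_forall_adj σ.2
  invFun c := ⟨c ∘ H.connectedComponentMk,
    fun _ _ hij => congrArg c (ConnectedComponent.sound hij.reachable)⟩
  left_inv _ := rfl
  right_inv _ := funext fun x => x.ind fun _ => rfl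

theorem forall_fromEdgeSet_adj_imp_eq_iff {σ : V → α} {A : Set (Sym2 V)} :
    (∀ i j, (fromEdgeSet A).Adj i j → σ i = σ j) ↔ ∀ e ∈ A, (e.map σ).IsDiag := by
  constructor
  · intro h e
    induction e using Sym2.ind with
    | _ u v =>
      intro he
      rw [Sym2.map_mk, Sym2.mk_isDiag_iff]
      by_cases huv : u = v
      · rw [huv]
      · exact h u v ((fromEdgeSet_adj _).mpr ⟨he, huv⟩)
  · intro h i j hij
    simpa using h _ ((fromEdgeSet_adj _).mp hij).1

variable [Fintype V] (G : SimpleGraph V) [DecidableRel G.Adj]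

theorem filter_isDiag_map_eq_empty_iff [DecidableEq α] (σ : V → α) :
    G.edgeFinset.filter (fun e => (e.map σ).IsDiag) = ∅ ↔ ∀ i j, G.Adj i j → σ i ≠ σ j := by
  rw [filter_eq_empty_iff]
  refine ⟨fun h i j hij hσ => h (G.mem_edgeFinset.mpr (G.mem_edgeSet.mpr hij)) ?_,
    fun h e he => ?_⟩
  · rwa [Sym2.map_mk, Sym2.mk_isDiag_iff]
  · induction e using Sym2.ind with
    | _ u v =>
      rw [Sym2.map_mk, Sym2.mk_isDiag_iff]
      exact h u v (mem_edgeFinset.mp he)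

variable [DecidableEq V]

theorem kcomp_univ (A : Finset (Sym2 V)) :
    kcomp univ A = Nat.card (fromEdgeSet (A : Set (Sym2 V))).ConnectedComponent := by
  unfold kcomp
  rw [coe_univ]
  exact Nat.card_congr (induceUnivIso _).connectedComponentEquiv

theorem edgesWithin_univ : edgesWithin G univ = G.edgeFinset := by
  simp [edgesWithin]

theorem card_forall_isDiag_map [Fintype α] (A : Finset (Sym2 V)) :
    Nat.card {σ : V → α // ∀ e ∈ A, (e.map σ).IsDiag} = Fintype.card α ^ kcomp univ A := by
  rw [kcomp_univ, ← Nat.card_eq_fintype_card, ← Nat.card_fun,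
    ← Nat.card_congr (ConnectedComponent.liftEquiv _)]
  exact Nat.card_congr (Equiv.subtypeEquivRight fun _ => forall_fromEdgeSet_adj_imp_eq_iff.symm)

theorem sum_neg_one_pow_mul_pow_kcomp [Fintype α] :
    ∑ A ∈ G.edgeFinset.powerset, (-1 : ℤ) ^ #A * (Fintype.card α : ℤ) ^ kcomp univ A
      = Nat.card {σ : V → α // ∀ i j, G.Adj i j → σ i ≠ σ j} := by
  classical
  set M : (V → α) → Finset (Sym2 V) := fun σ => G.edgeFinset.filter (fun e => (e.map σ).IsDiag)
  have hpow : ∀ A ∈ G.edgeFinset.powerset,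
      (Fintype.card α : ℤ) ^ kcomp univ A = #(univ.filter fun σ : V → α => A ⊆ M σ) := by
    intro A hA
    rw [← Nat.cast_pow, ← card_forall_isDiag_map, Nat.card_eq_fintype_card,
      Fintype.card_subtype]
    congr 2
    ext σ
    simp only [M, mem_filter, mem_univ, true_and, subset_iff]
    exact forall₂_congr fun e he => (and_iff_right (mem_powerset.mp hA he)).symm
  calc ∑ A ∈ G.edgeFinset.powerset, (-1 : ℤ) ^ #A * (Fintype.card α : ℤ) ^ kcomp univ A
      = ∑ σ : V → α, ∑ A ∈ G.edgeFinset.powerset with A ⊆ M σ, (-1 : ℤ) ^ #A := by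
        rw [Finset.sum_congr rfl fun A hA => congrArg _ (hpow A hA)]
        simp only [natCast_card_filter, mul_sum, mul_ite, mul_one, mul_zero]
        rw [sum_comm]
        simp only [sum_filter]
    _ = ∑ σ : V → α, ∑ A ∈ (M σ).powerset, (-1 : ℤ) ^ #A := by
        refine Finset.sum_congr rfl fun σ _ => congrArg₂ _ ?_ rfl
        ext A
        simp only [mem_filter, mem_powerset, and_iff_right_iff_imp]
        exact fun h => h.trans (filter_subset _ _)
    _ = ∑ σ : V → α, if M σ = ∅ then 1 else 0 :=
        Finset.sum_congr rfl fun σ _ => sum_powerset_neg_one_pow_card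
    _ = Nat.card {σ : V → α // ∀ i j, G.Adj i j → σ i ≠ σ j} := by
        simp only [M, filter_isDiag_map_eq_empty_iff]
        rw [sum_boole, Nat.card_eq_fintype_card, Fintype.card_subtype]

end Whitney

theorem Polynomial.eq_of_eval_natCast_eq {R : Type*} [CommRing R] [IsDomain R] [CharZero R]
    {p q : R[X]} (h : ∀ n : ℕ, p.eval (n : R) = q.eval (n : R)) : p = q :=
  eq_of_infinite_eval_eq p q <| (Set.infinite_range_of_injective Nat.cast_injective).mono <|
    Set.range_subset_iff.mpr h

theorem descPochhammer_coeff_one {R : Type*} [CommRing R] (k : ℕ) :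
    (descPochhammer R (k + 1)).coeff 1 = (-1) ^ k * k.factorial := by
  induction k with
  | zero => simp
  | succ k ih =>
    rw [descPochhammer_succ_right, mul_sub, coeff_sub, ← C_eq_natCast, coeff_mul_C, ih,
      coeff_mul_X, coeff_zero_eq_eval_zero, descPochhammer_ne_zero_eval_zero R k.succ_ne_zero]
    push_cast [Nat.factorial_succ]
    ring

section ChromaticPolynomial

variable {V : Type*} [Fintype V] [DecidableEq V] (G : SimpleGraph V) [DecidableRel G.Adj]

/-- Whitney's subgraph expansion, taken as the definition so that coefficients can be read off. -/
noncomputable def chromaticPolynomial : ℤ[X] :=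
  ∑ A ∈ G.edgeFinset.powerset, C ((-1) ^ #A) * X ^ kcomp univ A

theorem eval_chromaticPolynomial (q : ℕ) :
    (chromaticPolynomial G).eval (q : ℤ)
      = Nat.card {σ : V → Fin q // ∀ i j, G.Adj i j → σ i ≠ σ j} := by
  simpa [chromaticPolynomial, eval_finsetSum] using sum_neg_one_pow_mul_pow_kcomp G (α := Fin q)

theorem chromaticPolynomial_eq_sum_descPochhammer [Nonempty V] :
    chromaticPolynomial G = ∑ k ∈ Icc 1 (Fintype.card V),
      C (Nat.card {π : Finpartition (univ : Finset V) // #π.parts = k ∧ G.IsIndepPartition π} :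
        ℤ) * descPochhammer ℤ k := by
  refine eq_of_eval_natCast_eq fun q => ?_
  rw [eval_chromaticPolynomial, card_proper_eq_sum_descFactorial, Fintype.card_fin]
  simp [eval_finsetSum, descPochhammer_eval_eq_descFactorial, mul_comm]

theorem coeff_one_chromaticPolynomial :
    (chromaticPolynomial G).coeff 1
      = ∑ A ∈ G.edgeFinset.powerset with kcomp univ A = 1, (-1) ^ #A := by
  rw [chromaticPolynomial, finsetSum_coeff, sum_filter]
  refine Finset.sum_congr rfl fun A _ => ?_
  rw [coeff_C_mul_X_pow]
  exact if_congr eq_comm rfl rfl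

end ChromaticPolynomial

theorem stmt11 {V : Type*} [Fintype V] [DecidableEq V] [Nonempty V]
    (G : SimpleGraph V) [DecidableRel G.Adj] (q : ℕ)
    (Q : ℕ → ℕ)
    (hQ : ∀ k, Q k = Nat.card {π : Finpartition (Finset.univ : Finset V) //
      π.parts.card = k ∧ ∀ B ∈ π.parts, ∀ i ∈ B, ∀ j ∈ B, ¬ G.Adj i j}) :
    Nat.card {σ : V → Fin q // ∀ i j, G.Adj i j → σ i ≠ σ j}
        = ∑ k ∈ Finset.Icc 1 (Fintype.card V), q.descFactorial k * Q k
      ∧ (∑ A ∈ (edgesWithin G Finset.univ).powerset.filter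
            (fun A => kcomp (Finset.univ : Finset V) A = 1), (-1 : ℤ) ^ A.card)
        = ∑ k ∈ Finset.Icc 1 (Fintype.card V),
            (-1 : ℤ) ^ (k - 1) * ((k - 1).factorial : ℤ) * (Q k : ℤ) := by
  have hQ' : ∀ k, Q k = Nat.card {π // #π.parts = k ∧ G.IsIndepPartition π} := hQ
  constructor
  · rw [card_proper_eq_sum_descFactorial, Fintype.card_fin]
    simp only [hQ']
  · rw [edgesWithin_univ, ← coeff_one_chromaticPolynomial,
      chromaticPolynomial_eq_sum_descPochhammer, finsetSum_coeff]
    refine Finset.sum_congr rfl fun k hk => ?_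
    obtain ⟨m, rfl⟩ : ∃ m, k = m + 1 := ⟨k - 1, by grind⟩
    rw [coeff_C_mul, descPochhammer_coeff_one, hQ', Nat.add_sub_cancel, mul_comm]
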